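/- Let p be a positive natural number, Y ∈ (Fin p → ℕ), μ ∈ (Fin p → ℝ), m ∈ (Fin p → ℝ), α ∈ [0,1), and let Σ and S be symmetric positive definite real p×p matrices. Define the Gaussian mixture proposal density q(v) = α·φ(v; m, S) + (1 − α)·φ(v; m, Σ) for v ∈ ℝ^p. Then the function v ↦ p_{Σ,μ}(Y, v)² / q(v) is Lebesgue-integrable on ℝ^p, i.e. ∫_{ℝ^p} p_{Σ,μ}(Y, v)² / q(v) dv < ∞. -/

import Mathlib

open MeasureTheory Real Matrix

/-- Joint density of the Poisson log-normal model: observed counts `Y` and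
latent vector `v`, with latent covariance `Sig` and linear predictor `μ`. -/
noncomputable def plnDensity (p : ℕ) (Sig : Matrix (Fin p) (Fin p) ℝ)
    (μ : Fin p → ℝ) (Y : Fin p → ℕ) (v : Fin p → ℝ) : ℝ :=
  (2 * Real.pi) ^ (-(p : ℝ) / 2) * Sig.det ^ (-(1 : ℝ) / 2) *
    Real.exp (-(1 / 2) * (v ⬝ᵥ Sig⁻¹.mulVec v)) *
    ∏ j, Real.exp ((Y j : ℝ) * (μ j + v j) - Real.exp (μ j + v j)) /
      (Nat.factorial (Y j) : ℝ)

/-- Gaussian density on `ℝ^p` with mean `m` and covariance `S`. -/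
noncomputable def gaussDensity (p : ℕ) (m : Fin p → ℝ)
    (S : Matrix (Fin p) (Fin p) ℝ) (v : Fin p → ℝ) : ℝ :=
  (2 * Real.pi) ^ (-(p : ℝ) / 2) * S.det ^ (-(1 : ℝ) / 2) *
    Real.exp (-(1 / 2) * ((v - m) ⬝ᵥ S⁻¹.mulVec (v - m)))

/-! The mixture dominates `(1 - α) φ(·; m, Σ)`, and each Poisson factor of the PLN density is a
probability, hence at most `1`, so `p_{Σ,μ}(Y, ·) ≤ φ(·; 0, Σ)`. By the parallelogram law for the
quadratic form `Σ⁻¹`, `φ(v; 0, Σ)² = exp (mᵀ Σ⁻¹ m) φ(v; m, Σ) φ(v; -m, Σ)`, so the integrand is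
bounded by a constant multiple of the Gaussian density `φ(·; -m, Σ)`. That density is integrable
because a positive definite form dominates a multiple of `∑ vᵢ²` (compactness of the unit sphere),
which reduces it to a product of one-dimensional Gaussians. -/

lemma exists_pos_mul_norm_sq_le_of_homogeneous {E : Type*} [NormedAddCommGroup E]
    [NormedSpace ℝ E] [FiniteDimensional ℝ E] {Q : E → ℝ} (hQ : Continuous Q)
    (hsmul : ∀ (t : ℝ) x, Q (t • x) = t ^ 2 * Q x) (hpos : ∀ x ≠ 0, 0 < Q x) :
    ∃ c > 0, ∀ x, c * ‖x‖ ^ 2 ≤ Q x := by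
  have hQ0 : Q 0 = 0 := by simpa using hsmul 0 0
  rcases subsingleton_or_nontrivial E with hE | hE
  · exact ⟨1, one_pos, fun x => by simp [Subsingleton.elim x 0, hQ0]⟩
  obtain ⟨u₀, hu₀, hmin⟩ := (isCompact_sphere (0 : E) 1).exists_isMinOn
    (NormedSpace.sphere_nonempty.2 zero_le_one) hQ.continuousOn
  refine ⟨Q u₀, hpos u₀ (ne_zero_of_mem_unit_sphere ⟨u₀, hu₀⟩), fun x => ?_⟩
  rcases eq_or_ne x 0 with rfl | hx
  · simp [hQ0]
  have hx' : ‖x‖ ≠ 0 := norm_ne_zero_iff.2 hx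
  have hu : ‖x‖⁻¹ • x ∈ Metric.sphere (0 : E) 1 := by
    simp [norm_smul, hx']
  calc Q u₀ * ‖x‖ ^ 2 ≤ Q (‖x‖⁻¹ • x) * ‖x‖ ^ 2 := by gcongr; exact hmin hu
    _ = Q x := by rw [hsmul]; field_simp

theorem Matrix.PosDef.exists_pos_mul_sum_sq_le {n : Type*} [Fintype n] {A : Matrix n n ℝ}
    (hA : A.PosDef) : ∃ c > 0, ∀ v : n → ℝ, c * ∑ i, v i ^ 2 ≤ v ⬝ᵥ A *ᵥ v := by
  obtain ⟨c, hc, hle⟩ := exists_pos_mul_norm_sq_le_of_homogeneous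
    (Q := fun x : EuclideanSpace ℝ n => x.ofLp ⬝ᵥ A *ᵥ x.ofLp) (by fun_prop)
    (fun t x => by simp [mulVec_smul]; ring)
    (fun x hx => hA.dotProduct_mulVec_pos (by simpa using hx))
  exact ⟨c, hc, fun v => by simpa [EuclideanSpace.real_norm_sq_eq] using hle (WithLp.toLp 2 v)⟩

theorem Matrix.PosDef.integrable_exp_neg_mul_dotProduct_mulVec {n : Type*} [Fintype n]
    {A : Matrix n n ℝ} (hA : A.PosDef) {b : ℝ} (hb : 0 < b) :
    Integrable (fun v : n → ℝ => exp (-b * (v ⬝ᵥ A *ᵥ v))) := by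
  obtain ⟨c, hc, hle⟩ := hA.exists_pos_mul_sum_sq_le
  have hprod : Integrable (fun v : n → ℝ => ∏ i, exp (-(b * c) * v i ^ 2)) :=
    Integrable.fintype_prod (f := fun _ x => exp (-(b * c) * x ^ 2))
      fun _ => integrable_exp_neg_mul_sq (by positivity)
  refine hprod.mono' (by fun_prop) (Filter.Eventually.of_forall fun v => ?_)
  rw [norm_of_nonneg (exp_nonneg _), ← exp_sum, exp_le_exp, ← Finset.mul_sum, neg_mul, neg_mul,
    neg_le_neg_iff, mul_assoc]
  exact mul_le_mul_of_nonneg_left (hle v) hb.le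

theorem integrable_gaussDensity {p : ℕ} (m : Fin p → ℝ) {S : Matrix (Fin p) (Fin p) ℝ}
    (hS : S.PosDef) : Integrable (gaussDensity p m S) :=
  ((hS.inv.integrable_exp_neg_mul_dotProduct_mulVec one_half_pos).comp_sub_right m).const_mul _

theorem gaussDensity_pos {p : ℕ} (m : Fin p → ℝ) {S : Matrix (Fin p) (Fin p) ℝ}
    (hS : S.PosDef) (v : Fin p → ℝ) : 0 < gaussDensity p m S v := by
  have := hS.det_pos
  unfold gaussDensity
  positivity

theorem continuous_gaussDensity (p : ℕ) (m : Fin p → ℝ) (S : Matrix (Fin p) (Fin p) ℝ) :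
    Continuous (gaussDensity p m S) := by
  unfold gaussDensity; fun_prop

theorem continuous_plnDensity (p : ℕ) (Sig : Matrix (Fin p) (Fin p) ℝ) (μ : Fin p → ℝ)
    (Y : Fin p → ℕ) : Continuous (plnDensity p Sig μ Y) := by
  unfold plnDensity; fun_prop

theorem gaussDensity_mul_gaussDensity_neg (p : ℕ) (m : Fin p → ℝ)
    (S : Matrix (Fin p) (Fin p) ℝ) (v : Fin p → ℝ) :
    gaussDensity p m S v * gaussDensity p (-m) S v =
      exp (-(m ⬝ᵥ S⁻¹ *ᵥ m)) * gaussDensity p 0 S v ^ 2 := by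
  have hpar : (v - m) ⬝ᵥ S⁻¹ *ᵥ (v - m) + (v - -m) ⬝ᵥ S⁻¹ *ᵥ (v - -m) =
      2 * (v ⬝ᵥ S⁻¹ *ᵥ v) + 2 * (m ⬝ᵥ S⁻¹ *ᵥ m) := by
    simp only [sub_neg_eq_add, mulVec_sub, mulVec_add, dotProduct_sub, dotProduct_add,
      sub_dotProduct, add_dotProduct]
    ring
  have hexp : exp (-(1 / 2) * ((v - m) ⬝ᵥ S⁻¹ *ᵥ (v - m))) *
      exp (-(1 / 2) * ((v - -m) ⬝ᵥ S⁻¹ *ᵥ (v - -m))) =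
      exp (-(m ⬝ᵥ S⁻¹ *ᵥ m)) * exp (-(1 / 2) * (v ⬝ᵥ S⁻¹ *ᵥ v)) ^ 2 := by
    rw [← exp_add, sq, ← exp_add, ← exp_add]
    congr 1
    linarith
  simp only [gaussDensity, sub_zero]
  linear_combination ((2 * π) ^ (-(p : ℝ) / 2) * S.det ^ (-(1 : ℝ) / 2)) ^ 2 * hexp

/-- The left-hand side is the Poisson probability of `k` under the rate `exp t`. -/
theorem exp_nat_mul_sub_exp_div_factorial_le_one (k : ℕ) (t : ℝ) :
    exp (k * t - exp t) / k.factorial ≤ 1 := by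
  rw [div_le_one (by positivity), exp_sub, div_le_iff₀ (exp_pos _), exp_nat_mul,
    ← div_le_iff₀' (by positivity)]
  exact pow_div_factorial_le_exp _ (exp_nonneg t) k

theorem plnDensity_eq_gaussDensity_mul (p : ℕ) (Sig : Matrix (Fin p) (Fin p) ℝ) (μ : Fin p → ℝ)
    (Y : Fin p → ℕ) (v : Fin p → ℝ) :
    plnDensity p Sig μ Y v = gaussDensity p 0 Sig v *
      ∏ j, exp ((Y j : ℝ) * (μ j + v j) - exp (μ j + v j)) / (Y j).factorial := by
  simp [plnDensity, gaussDensity]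

theorem plnDensity_sq_le (p : ℕ) (Sig : Matrix (Fin p) (Fin p) ℝ) (μ : Fin p → ℝ)
    (Y : Fin p → ℕ) (v : Fin p → ℝ) :
    plnDensity p Sig μ Y v ^ 2 ≤ gaussDensity p 0 Sig v ^ 2 := by
  rw [plnDensity_eq_gaussDensity_mul, mul_pow]
  refine mul_le_of_le_one_right (sq_nonneg _) (pow_le_one₀ (by positivity) ?_)
  exact Finset.prod_le_one (fun j _ => by positivity)
    fun j _ => exp_nat_mul_sub_exp_div_factorial_le_one _ _

theorem pln_mixture_weights_finite_variance_general (p : ℕ)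
    (Y : Fin p → ℕ) (μ : Fin p → ℝ) (m : Fin p → ℝ)
    (α : ℝ) (hα0 : 0 ≤ α) (hα1 : α < 1)
    (Sig S : Matrix (Fin p) (Fin p) ℝ)
    (hSig : Sig.PosDef) (hS : S.PosDef) :
    Integrable (fun v : Fin p → ℝ =>
      (plnDensity p Sig μ Y v) ^ 2 /
        (α * gaussDensity p m S v + (1 - α) * gaussDensity p m Sig v)) volume := by
  have hα : 0 < 1 - α := sub_pos.2 hα1
  have hmix_ge (v : Fin p → ℝ) : (1 - α) * gaussDensity p m Sig v ≤
      α * gaussDensity p m S v + (1 - α) * gaussDensity p m Sig v :=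
    le_add_of_nonneg_left (mul_nonneg hα0 (gaussDensity_pos m hS v).le)
  have hlow_pos (v : Fin p → ℝ) : 0 < (1 - α) * gaussDensity p m Sig v :=
    mul_pos hα (gaussDensity_pos m hSig v)
  refine ((integrable_gaussDensity (-m) hSig).const_mul
    (exp (m ⬝ᵥ Sig⁻¹ *ᵥ m) / (1 - α))).mono' ?_ (.of_forall fun v => ?_)
  · refine (((continuous_plnDensity p Sig μ Y).pow 2).div ?_
      fun v => ((hlow_pos v).trans_le (hmix_ge v)).ne').aestronglyMeasurable
    exact (continuous_const.mul (continuous_gaussDensity p m S)).add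
      (continuous_const.mul (continuous_gaussDensity p m Sig))
  have hmix_pos := (hlow_pos v).trans_le (hmix_ge v)
  rw [norm_of_nonneg (div_nonneg (sq_nonneg _) hmix_pos.le), div_le_iff₀ hmix_pos]
  have hφ := gaussDensity_pos (-m) hSig v
  calc plnDensity p Sig μ Y v ^ 2 ≤ gaussDensity p 0 Sig v ^ 2 := plnDensity_sq_le p Sig μ Y v
    _ = exp (m ⬝ᵥ Sig⁻¹ *ᵥ m) * (gaussDensity p m Sig v * gaussDensity p (-m) Sig v) := by
      rw [gaussDensity_mul_gaussDensity_neg, ← mul_assoc, ← exp_add, add_neg_cancel, exp_zero,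
        one_mul]
    _ = exp (m ⬝ᵥ Sig⁻¹ *ᵥ m) / (1 - α) * gaussDensity p (-m) Sig v *
        ((1 - α) * gaussDensity p m Sig v) := by
      field_simp
    _ ≤ _ := by gcongr; exact hmix_ge v

theorem pln_mixture_weights_finite_variance (p : ℕ) (hp : 0 < p)
    (Y : Fin p → ℕ) (μ : Fin p → ℝ) (m : Fin p → ℝ)
    (α : ℝ) (hα0 : 0 ≤ α) (hα1 : α < 1)
    (Sig S : Matrix (Fin p) (Fin p) ℝ)
    (hSig : Sig.PosDef) (hS : S.PosDef) :
    Integrable (fun v : Fin p → ℝ =>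
      (plnDensity p Sig μ Y v) ^ 2 /
        (α * gaussDensity p m S v + (1 - α) * gaussDensity p m Sig v)) volume :=
  pln_mixture_weights_finite_variance_general p Y μ m α hα0 hα1 Sig S hSig hS
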